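/- arXiv:2012.04833 — 4 statements merged into one kernel-verified Lean document; each statement's English description precedes it below -/
import Mathlib

section
/- Let s ∈ (0,1) with s ≠ 1/2, let a > 0 and b ∈ (-a, a) with b ≠ 0. Then there exists a unique γ ∈ (0, 2s) satisfying tan(πs) = (a/b) tan(π(s-γ)). Moreover, if s > 1/2, then γ ∈ (2s-1, 1). -/
/-!
Put `θ = πs` and `x = π(s - γ)`, so that `γ ∈ (0, 2s)` means `|x| < θ` and the equation reads
`tan x = c` with `c = (b/a) tan θ`, where `0 < |c| < |tan θ|`. For `y ∈ [0, π] \ {π/2}` one has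
`arctan |tan y| = min y (π - y)`, so `|arctan c| < min θ (π - θ)`: this gives the solution
`x = arctan c` and, for `s > 1/2`, the bound `|x| < π - θ`. Conversely, a solution with
`π/2 < |x| < θ` would have `arctan |c| = π - |x| > π - θ ≥ arctan |tan θ|`, which is impossible,
so every solution lies in `(-π/2, π/2)`, where `tan` is injective.
-/

open Real Set

theorem eq_div_mul_iff_eq_div_mul {K : Type*} [Field K] {a b x y : K} (ha : a ≠ 0) (hb : b ≠ 0) :
    x = a / b * y ↔ y = b / a * x := by
  rw [div_mul_eq_mul_div, eq_div_iff hb, div_mul_eq_mul_div, eq_div_iff ha]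
  constructor <;> intro h <;> linear_combination -h

theorem abs_div_mul_lt_abs {K : Type*} [Field K] [LinearOrder K] [IsStrictOrderedRing K]
    {a b x : K} (hb : |b| < a) (hx : x ≠ 0) : |b / a * x| < |x| := by
  have ha : 0 < a := (abs_nonneg b).trans_lt hb
  rw [abs_mul, abs_div, abs_of_pos ha]
  exact mul_lt_of_lt_one_left (abs_pos.mpr hx) ((div_lt_one ha).mpr hb)

namespace Real

theorem abs_pi_mul_sub_lt_iff (s γ : ℝ) : |π * (s - γ)| < π * s ↔ γ ∈ Ioo 0 (2 * s) := by
  rw [abs_mul, abs_of_pos pi_pos, mul_lt_mul_iff_right₀ pi_pos, abs_sub_lt_iff, mem_Ioo]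
  constructor <;> rintro ⟨h₁, h₂⟩ <;> constructor <;> linarith

theorem abs_arctan (x : ℝ) : |arctan x| = arctan |x| := by
  rcases le_total 0 x with hx | hx
  · rw [abs_of_nonneg hx, abs_of_nonneg (arctan_nonneg.mpr hx)]
  · rw [abs_of_nonpos hx, arctan_neg, abs_of_nonpos (arctan_zero ▸ arctan_strictMono.monotone hx)]

theorem abs_tan_abs (x : ℝ) : |tan (|x|)| = |tan x| := by
  rcases abs_choice x with hx | hx <;> rw [hx]
  rw [tan_neg, abs_neg]

theorem arctan_abs_tan {y : ℝ} (hy₀ : 0 ≤ y) (hyπ : y ≤ π) (hy : y ≠ π / 2) :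
    arctan |tan y| = min y (π - y) := by
  rcases hy.lt_or_gt with hy | hy
  · rw [abs_of_nonneg (tan_nonneg_of_nonneg_of_le_pi_div_two hy₀ hy.le),
      arctan_tan (by linarith) hy, min_eq_left (by linarith)]
  · rw [← neg_neg (tan y), ← tan_pi_sub, abs_neg,
      abs_of_nonneg (tan_nonneg_of_nonneg_of_le_pi_div_two (by linarith) (by linarith)),
      arctan_tan (by linarith) (by linarith), min_eq_right (by linarith)]

theorem tan_ne_zero_of_pos_of_lt_pi {θ : ℝ} (hθ₀ : 0 < θ) (hθπ : θ < π) (hθ : θ ≠ π / 2) :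
    tan θ ≠ 0 := by
  intro h
  have := arctan_abs_tan hθ₀.le hθπ.le hθ
  rw [h, abs_zero, arctan_zero] at this
  exact (lt_min hθ₀ (sub_pos.mpr hθπ)).ne this

theorem abs_arctan_lt_min {θ c : ℝ} (hθ₀ : 0 < θ) (hθπ : θ < π) (hθ : θ ≠ π / 2)
    (hc : |c| < |tan θ|) : |arctan c| < min θ (π - θ) := by
  rw [abs_arctan, ← arctan_abs_tan hθ₀.le hθπ.le hθ]
  exact arctan_strictMono hc

theorem eq_arctan_of_tan_eq {θ c x : ℝ} (hθ₀ : 0 < θ) (hθπ : θ < π) (hθ : θ ≠ π / 2)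
    (hc₀ : c ≠ 0) (hc : |c| < |tan θ|) (hx : |x| < θ) (htan : tan x = c) : x = arctan c := by
  have hx_ne : |x| ≠ π / 2 := by
    intro h
    apply hc₀
    rw [← abs_eq_zero, ← htan, ← abs_tan_abs, h, tan_pi_div_two, abs_zero]
  have hmin : min |x| (π - |x|) < min θ (π - θ) := by
    rw [← arctan_abs_tan (abs_nonneg x) (by linarith) hx_ne, abs_tan_abs, htan,
      ← arctan_abs_tan hθ₀.le hθπ.le hθ]
    exact arctan_strictMono hc
  have hx_lt : |x| < π / 2 := by
    by_contra! h
    rw [min_eq_right (by linarith)] at hmin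
    linarith [min_le_right θ (π - θ)]
  rw [← htan, arctan_tan (neg_lt_of_abs_lt hx_lt) (lt_of_abs_lt hx_lt)]

end Real

theorem stmt2 (s a b : ℝ) (hs : s ∈ Set.Ioo (0:ℝ) 1) (hs2 : s ≠ 1/2)
    (ha : 0 < a) (hb : b ∈ Set.Ioo (-a) a) (hb0 : b ≠ 0) :
    (∃! γ : ℝ, γ ∈ Set.Ioo 0 (2*s) ∧
      Real.tan (Real.pi * s) = (a/b) * Real.tan (Real.pi * (s - γ))) ∧
    (1/2 < s → ∀ γ : ℝ, γ ∈ Set.Ioo 0 (2*s) →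
      Real.tan (Real.pi * s) = (a/b) * Real.tan (Real.pi * (s - γ)) →
      γ ∈ Set.Ioo (2*s - 1) 1) := by
  obtain ⟨hs0, hs1⟩ := hs
  set θ := π * s
  have hθ₀ : 0 < θ := by positivity
  have hθπ : θ < π := by nlinarith [pi_pos]
  have hθ : θ ≠ π / 2 := fun h => hs2 (by nlinarith [pi_pos])
  have htanθ := tan_ne_zero_of_pos_of_lt_pi hθ₀ hθπ hθ
  set c := b / a * tan θ
  have hc₀ : c ≠ 0 := mul_ne_zero (div_ne_zero hb0 ha.ne') htanθ
  have hc : |c| < |tan θ| := abs_div_mul_lt_abs (abs_lt.mpr hb) htanθ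
  have hbound := abs_arctan_lt_min hθ₀ hθπ hθ hc
  have hroot : ∀ γ, γ ∈ Ioo 0 (2 * s) → tan θ = a / b * tan (π * (s - γ)) →
      π * (s - γ) = arctan c := fun γ hγ h =>
    eq_arctan_of_tan_eq hθ₀ hθπ hθ hc₀ hc ((abs_pi_mul_sub_lt_iff s γ).mpr hγ)
      ((eq_div_mul_iff_eq_div_mul ha.ne' hb0).mp h)
  have hx₀ : π * (s - (s - arctan c / π)) = arctan c := by
    rw [sub_sub_cancel, mul_div_cancel₀ _ pi_ne_zero]
  refine ⟨⟨s - arctan c / π, ⟨?_, ?_⟩, fun γ ⟨hγ, h⟩ => ?_⟩, ?_⟩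
  · rw [← abs_pi_mul_sub_lt_iff, hx₀]
    exact hbound.trans_le (min_le_left _ _)
  · rw [eq_div_mul_iff_eq_div_mul ha.ne' hb0, hx₀, tan_arctan]
  · rw [← hroot γ hγ h]
    field_simp
    ring
  · intro hs γ hγ h
    rw [← hroot γ hγ h, min_eq_right (by nlinarith [pi_pos]), abs_lt] at hbound
    constructor <;> nlinarith [pi_pos, hbound.1, hbound.2]
end

section
/- Let s ∈ (0,1) with s ≠ 1/2, a > 0 and b ∈ (-a,a) with b ≠ 0. Then the unique γ ∈ (0,2s) satisfying tan(πs) = (a/b) tan(π(s-γ)) is given by γ = s - (1/π) arctan((b/a) tan(πs)), and this γ also lies in (2s-1, 1). -/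
/-!
Put `t = arctan ((b/a) tan (πs))`, so that `γ = s - t/π` and `π(s - γ) = t`; the equation for `γ` then
holds because `tan ∘ arctan = id`. Since `|b/a| < 1` and `tan (πs) ≠ 0`, `|t| < arctan |tan (πs)| = π min(s, 1-s)`,
which is exactly the statement that `γ` lies in both intervals. For uniqueness, `x = π(s - γ')` with
`γ' ∈ (0, 2s)` has `|x| < πs`, so `|x - t| < π`, and two angles with equal (nonzero) tangents whose difference
is less than `π` in absolute value coincide.
-/

open Real Set

namespace Real

lemma eq_of_tan_eq_of_abs_sub_lt_pi {x y : ℝ} (hx : cos x ≠ 0) (hy : cos y ≠ 0)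
    (h : tan x = tan y) (hxy : |x - y| < π) : x = y := by
  have hsin : sin (x - y) = 0 := by
    rw [tan_eq_sin_div_cos, tan_eq_sin_div_cos, div_eq_div_iff hx hy] at h
    rw [sin_sub, h, mul_comm (cos x)]
    ring
  obtain ⟨hlo, hhi⟩ := abs_lt.mp hxy
  linarith [(sin_eq_zero_iff_of_lt_of_lt hlo hhi).mp hsin]

lemma arctan_abs_tan_of_pos_of_lt_pi_div_two {x : ℝ} (h0 : 0 < x) (h : x < π / 2) :
    arctan |tan x| = x := by
  rw [abs_of_pos (tan_pos_of_pos_of_lt_pi_div_two h0 h), arctan_tan (by linarith) h]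

lemma arctan_abs_tan_pi_mul {s : ℝ} (hs : s ∈ Ioo (0 : ℝ) 1) (hs2 : s ≠ 1 / 2) :
    arctan |tan (π * s)| = π * min s (1 - s) := by
  obtain ⟨hs0, hs1⟩ := hs
  have hπ := pi_pos
  rcases hs2.lt_or_gt with hlt | hgt
  · rw [min_eq_left (by linarith)]
    exact arctan_abs_tan_of_pos_of_lt_pi_div_two (by positivity) (by nlinarith)
  · rw [min_eq_right (by linarith), ← abs_neg, ← tan_pi_sub, show π - π * s = π * (1 - s) by ring]
    exact arctan_abs_tan_of_pos_of_lt_pi_div_two (by nlinarith) (by nlinarith)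

lemma abs_arctan_mul_lt_arctan_abs {r T : ℝ} (hr : |r| < 1) (hT : T ≠ 0) :
    |arctan (r * T)| < arctan |T| := by
  have hrT : |r * T| < |T| := by
    rw [abs_mul]
    exact mul_lt_of_lt_one_left (abs_pos.mpr hT) hr
  obtain ⟨hlo, hhi⟩ := abs_lt.mp hrT
  rw [abs_lt, ← arctan_neg]
  exact ⟨arctan_strictMono hlo, arctan_strictMono hhi⟩

lemma tan_pi_mul_ne_zero {s : ℝ} (hs : s ∈ Ioo (0 : ℝ) 1) (hs2 : s ≠ 1 / 2) : tan (π * s) ≠ 0 :=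
  fun h => by
    have h0 : arctan |tan (π * s)| = 0 := by rw [h, abs_zero, arctan_zero]
    have : 0 < π * min s (1 - s) := mul_pos pi_pos (lt_min hs.1 (by linarith [hs.2]))
    linarith [arctan_abs_tan_pi_mul hs hs2]

lemma abs_arctan_mul_tan_pi_mul_lt {r s : ℝ} (hr : |r| < 1) (hs : s ∈ Ioo (0 : ℝ) 1)
    (hs2 : s ≠ 1 / 2) :
    |arctan (r * tan (π * s))| < π * s ∧ |arctan (r * tan (π * s))| < π * (1 - s) := by
  have h := abs_arctan_mul_lt_arctan_abs hr (tan_pi_mul_ne_zero hs hs2)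
  rwa [arctan_abs_tan_pi_mul hs hs2, mul_min_of_nonneg _ _ pi_pos.le, lt_min_iff] at h

end Real

theorem stmt3 (s a b : ℝ) (hs : s ∈ Set.Ioo (0:ℝ) 1) (hs2 : s ≠ 1/2)
    (ha : 0 < a) (hb : b ∈ Set.Ioo (-a) a) (hb0 : b ≠ 0) :
    let γ := s - (1/Real.pi) * Real.arctan ((b/a) * Real.tan (Real.pi * s))
    γ ∈ Set.Ioo 0 (2*s) ∧ γ ∈ Set.Ioo (2*s - 1) 1 ∧
    Real.tan (Real.pi * s) = (a/b) * Real.tan (Real.pi * (s - γ)) ∧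
    ∀ γ' ∈ Set.Ioo 0 (2*s),
      Real.tan (Real.pi * s) = (a/b) * Real.tan (Real.pi * (s - γ')) → γ' = γ := by
  intro γ
  set T := tan (π * s)
  set t := arctan ((b / a) * T)
  have hπ := pi_pos
  have hr : |b / a| < 1 := by
    rw [abs_div, abs_of_pos ha, div_lt_one ha]
    exact abs_lt.mpr hb
  obtain ⟨hts, ht1s⟩ := abs_arctan_mul_tan_pi_mul_lt hr hs hs2
  have hπγ : π * (s - γ) = t := by
    change π * (s - (s - 1 / π * t)) = t
    field_simp
    ring
  have htan : tan (π * (s - γ)) = (b / a) * T := by rw [hπγ, tan_arctan]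
  refine ⟨?_, ?_, by rw [htan]; field_simp, fun γ' hγ' h => ?_⟩
  · constructor <;> nlinarith [abs_lt.mp hts]
  · constructor <;> nlinarith [abs_lt.mp ht1s]
  · have htan' : tan (π * (s - γ')) = tan t := by
      rw [tan_arctan]; field_simp at h ⊢; linarith
    have hcos : cos (π * (s - γ')) ≠ 0 := fun hc => by
      rw [tan_arctan, tan_eq_sin_div_cos, hc, div_zero] at htan'
      exact mul_ne_zero (div_ne_zero hb0 ha.ne') (tan_pi_mul_ne_zero hs hs2) htan'.symm
    have hdist : |π * (s - γ') - t| < π := by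
      rw [abs_lt] at hts ht1s ⊢
      constructor <;> nlinarith [hγ'.1, hγ'.2]
    have := eq_of_tan_eq_of_abs_sub_lt_pi hcos (cos_arctan_pos _).ne' htan' hdist
    nlinarith
end

section
/- Let s ∈ (0, 1/2) and β ∈ (0, 2s). Then ∫_ℝ (1 - (1+y)₊^β) |y|^{-1-2s} dy = (Γ(1-2s)/(2s)) · (Γ(2s-β)/Γ(-β) + Γ(1+β)/Γ(1-2s+β)). -/
/-!
With `a = 2s`, split the line at `0` and reflect the left half, so that both halves become
integrals over `(0, ∞)` against `y ^ (-1 - a)`. Integrating by parts against the primitive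
`-y ^ (-a) / a` turns the right half into `-β / a · ∫₀^∞ (1 + y) ^ (β - 1) y ^ (-a) dy
= -β / a · B(1 - a, a - β)`, and the left half, after splitting off
`∫₁^∞ y ^ (-1 - a) dy = 1 / a`, into `β / a · ∫₀^1 (1 - y) ^ (β - 1) y ^ (-a) dy
= β / a · B(1 - a, β)`. The Beta values are `Γ`-quotients, and `Γ(x + 1) = x Γ(x)` at `x = -β`
and `x = β` absorbs the factors `∓β`.
-/

open Real MeasureTheory Set Filter Topology Asymptotics

theorem ofReal_rpow_mul_one_sub_rpow (u v : ℝ) {x : ℝ} (hx : x ∈ Icc (0 : ℝ) 1) :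
    ((x ^ (u - 1) * (1 - x) ^ (v - 1) : ℝ) : ℂ)
      = (x : ℂ) ^ ((u : ℂ) - 1) * (1 - (x : ℂ)) ^ ((v : ℂ) - 1) := by
  rw [Complex.ofReal_mul, Complex.ofReal_cpow hx.1, Complex.ofReal_cpow (sub_nonneg.2 hx.2)]
  push_cast
  rfl

theorem integral_rpow_mul_one_sub_rpow {u v : ℝ} (hu : 0 < u) (hv : 0 < v) :
    ∫ x in (0 : ℝ)..1, x ^ (u - 1) * (1 - x) ^ (v - 1) = Gamma u * Gamma v / Gamma (u + v) := by
  have h : Complex.betaIntegral u v = ↑(∫ x in (0 : ℝ)..1, x ^ (u - 1) * (1 - x) ^ (v - 1)) := by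
    rw [Complex.betaIntegral, ← intervalIntegral.integral_ofReal]
    refine intervalIntegral.integral_congr fun x hx => ?_
    rw [uIcc_of_le zero_le_one] at hx
    exact (ofReal_rpow_mul_one_sub_rpow u v hx).symm
  rw [← ProbabilityTheory.beta, ProbabilityTheory.beta_eq_betaIntegralReal u v hu hv, h,
    Complex.ofReal_re]

theorem intervalIntegrable_rpow_mul_one_sub_rpow {u v : ℝ} (hu : 0 < u) (hv : 0 < v) :
    IntervalIntegrable (fun x => x ^ (u - 1) * (1 - x) ^ (v - 1)) volume 0 1 := by
  refine IntervalIntegrable.congr (fun x hx => ?_)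
    (Complex.betaIntegral_convergent (u := u) (v := v) (by simpa) (by simpa)).norm
  rw [uIoc_of_le zero_le_one] at hx
  have hx' : x ∈ Icc (0 : ℝ) 1 := Ioc_subset_Icc_self hx
  rw [← ofReal_rpow_mul_one_sub_rpow u v hx', Complex.norm_real, norm_of_nonneg]
  exact mul_nonneg (rpow_nonneg hx'.1 _) (rpow_nonneg (sub_nonneg.2 hx'.2) _)

theorem image_div_one_sub_Ioo : (fun x : ℝ => x / (1 - x)) '' Ioo 0 1 = Ioi 0 := by
  ext t
  refine ⟨?_, fun (ht : 0 < t) => ⟨t / (1 + t), ⟨by positivity, ?_⟩, ?_⟩⟩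
  · rintro ⟨x, ⟨hx0, hx1⟩, rfl⟩
    exact div_pos hx0 (sub_pos.2 hx1)
  · rw [div_lt_one (by positivity)]; linarith
  · have : (1 : ℝ) + t ≠ 0 := by positivity
    field_simp
    ring

theorem integral_Ioi_rpow_mul_one_add_rpow {u v : ℝ} (hu : 0 < u) (hv : 0 < v) :
    ∫ t in Ioi (0 : ℝ), t ^ (u - 1) * (1 + t) ^ (-(u + v)) = Gamma u * Gamma v / Gamma (u + v) := by
  have hderiv : ∀ x ∈ Ioo (0 : ℝ) 1,
      HasDerivWithinAt (fun x => x / (1 - x)) (((1 - x) ^ 2)⁻¹) (Ioo 0 1) x := by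
    intro x hx
    have h1x : 1 - x ≠ 0 := (sub_pos.2 hx.2).ne'
    refine (((hasDerivAt_id x).div ((hasDerivAt_id x).const_sub 1) h1x).congr_deriv ?_)
      |>.hasDerivWithinAt
    simp only [id]
    field_simp
    ring
  have hinj : InjOn (fun x : ℝ => x / (1 - x)) (Ioo 0 1) := by
    intro x hx y hy hxy
    rw [div_eq_div_iff (sub_pos.2 hx.2).ne' (sub_pos.2 hy.2).ne'] at hxy
    linarith
  rw [← image_div_one_sub_Ioo,
    integral_image_eq_integral_abs_deriv_smul measurableSet_Ioo hderiv hinj,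
    ← integral_rpow_mul_one_sub_rpow hu hv, intervalIntegral.integral_of_le zero_le_one,
    integral_Ioc_eq_integral_Ioo]
  refine setIntegral_congr_fun measurableSet_Ioo fun x ⟨hx0, hx1⟩ => ?_
  have hw : 0 < 1 - x := sub_pos.2 hx1
  have h1 : 1 + x / (1 - x) = (1 - x)⁻¹ := by field_simp; ring
  have h2 : (1 - x) ^ (u + v) = (1 - x) ^ (u - 1) * (1 - x) ^ (v - 1) * (1 - x) ^ 2 := by
    rw [← rpow_add hw, ← rpow_natCast, ← rpow_add hw]
    ring_nf
  rw [h1, div_rpow hx0.le hw.le, inv_rpow hw.le, rpow_neg hw.le, inv_inv, h2, smul_eq_mul,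
    abs_of_pos (by positivity)]
  field_simp

theorem integrableOn_Ioi_of_isBigO_rpow {f : ℝ → ℝ} {p q : ℝ} (hf : ContinuousOn f (Ioi 0))
    (hp : -1 < p) (h0 : f =O[𝓝[>] 0] (· ^ p)) (hq : q < -1) (htop : f =O[atTop] (· ^ q)) :
    IntegrableOn f (Ioi 0) := by
  refine integrableOn_Ioi_iff_integrableAtFilter_atTop_nhdsWithin.2
    ⟨htop.integrableAtFilter ⟨Ioi 0, Ioi_mem_atTop 0, hf.aestronglyMeasurable measurableSet_Ioi⟩
      (integrableAtFilter_rpow_atTop_iff.2 hq),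
    h0.integrableAtFilter (hf.stronglyMeasurableAtFilter_nhdsWithin measurableSet_Ioi 0)
      ⟨Ioo 0 1, Ioo_mem_nhdsGT zero_lt_one,
        (intervalIntegral.integrableOn_Ioo_rpow_iff one_pos).2 hp⟩,
    hf.locallyIntegrableOn measurableSet_Ioi⟩

theorem Asymptotics.IsBigO.mul_rpow {l : Filter ℝ} (hl : ∀ᶠ y in l, 0 < y) {g : ℝ → ℝ} {p : ℝ}
    (hg : g =O[l] (· ^ p)) (q : ℝ) : (fun y => g y * y ^ q) =O[l] (· ^ (p + q)) :=
  (hg.mul (isBigO_refl (· ^ q) l)).congr' .rfl (hl.mono fun _ hy => (rpow_add hy p q).symm)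

theorem tendsto_rpow_nhdsGT_zero {p : ℝ} (hp : 0 < p) : Tendsto (· ^ p) (𝓝[>] (0 : ℝ)) (𝓝 0) := by
  simpa [zero_rpow hp.ne'] using
    (continuousAt_rpow_const 0 p (Or.inr hp.le)).tendsto.mono_left nhdsWithin_le_nhds

theorem one_add_rpow_isTheta_rpow (r : ℝ) : (fun y : ℝ => (1 + y) ^ r) =Θ[atTop] (· ^ r) := by
  have h : (fun y : ℝ => 1 + y) =Θ[atTop] id :=
    ((isLittleO_const_id_atTop (1 : ℝ)).right_isTheta_add).symm
  exact h.rpow (eventually_ge_atTop (-1) |>.mono fun y hy => by simp only [Pi.zero_apply]; linarith)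
    (eventually_ge_atTop 0)

theorem HasDerivAt.isBigO_rpow_one_nhdsGT_zero {g : ℝ → ℝ} {d : ℝ} (hg : HasDerivAt g d 0)
    (h0 : g 0 = 0) :
    g =O[𝓝[>] 0] (· ^ (1 : ℝ)) := by
  simpa [h0] using hg.isBigO_sub.mono nhdsWithin_le_nhds

theorem hasDerivAt_rpow_neg {y : ℝ} (hy : 0 < y) (a : ℝ) :
    HasDerivAt (· ^ (-a)) (-a * y ^ (-1 - a)) y := by
  simpa [sub_eq_neg_add, add_comm] using hasDerivAt_rpow_const (p := -a) (Or.inl hy.ne')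

theorem integral_Ioi_mul_rpow_neg_one_sub {g g' : ℝ → ℝ} {a : ℝ} (ha : a ≠ 0)
    (hg : ∀ y ∈ Ioi (0 : ℝ), HasDerivAt g (g' y) y)
    (h0 : Tendsto (fun y => g y * y ^ (-a)) (𝓝[>] 0) (𝓝 0))
    (htop : Tendsto (fun y => g y * y ^ (-a)) atTop (𝓝 0))
    (hi : IntegrableOn (fun y => g y * y ^ (-1 - a)) (Ioi 0))
    (hi' : IntegrableOn (fun y => g' y * y ^ (-a)) (Ioi 0)) :
    ∫ y in Ioi 0, g y * y ^ (-1 - a) = a⁻¹ * ∫ y in Ioi 0, g' y * y ^ (-a) := by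
  have h := integral_Ioi_mul_deriv_eq_deriv_mul hg (fun y hy => hasDerivAt_rpow_neg hy a)
    (IntegrableOn.congr_fun (hi.const_mul (-a)) (fun y _ => by simp only [Pi.mul_apply]; ring)
      measurableSet_Ioi)
    hi' h0 htop
  simp only [mul_left_comm (g _), integral_const_mul] at h
  field_simp
  linarith

theorem integral_zero_one_mul_rpow_neg_one_sub {g g' : ℝ → ℝ} {a : ℝ} (ha : a ≠ 0)
    (hg : ∀ y ∈ Ioo (0 : ℝ) 1, HasDerivAt g (g' y) y)
    (h0 : Tendsto (fun y => g y * y ^ (-a)) (𝓝[>] 0) (𝓝 0))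
    (h1 : ContinuousWithinAt g (Iio 1) 1)
    (hi : IntervalIntegrable (fun y => g y * y ^ (-1 - a)) volume 0 1)
    (hi' : IntervalIntegrable (fun y => g' y * y ^ (-a)) volume 0 1) :
    ∫ y in (0 : ℝ)..1, g y * y ^ (-1 - a) = a⁻¹ * ((∫ y in (0 : ℝ)..1, g' y * y ^ (-a)) - g 1) := by
  have h1' : Tendsto (fun y => g y * y ^ (-a)) (𝓝[<] 1) (𝓝 (g 1)) := by
    simpa using h1.tendsto.mul
      ((continuousAt_rpow_const 1 (-a) (Or.inl one_ne_zero)).tendsto.mono_left nhdsWithin_le_nhds)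
  have h := intervalIntegral.integral_eq_sub_of_hasDerivAt_of_tendsto zero_lt_one
    (f' := fun y => g' y * y ^ (-a) + -a * (g y * y ^ (-1 - a)))
    (fun y hy => ((hg y hy).mul (hasDerivAt_rpow_neg hy.1 a)).congr_deriv (by ring))
    (hi'.add (hi.const_mul (-a))) h0 h1'
  rw [intervalIntegral.integral_add hi' (hi.const_mul (-a)),
    intervalIntegral.integral_const_mul] at h
  field_simp
  linarith

theorem integral_eq_integral_Ioi_add_integral_Ioi_comp_neg {E : Type*} [NormedAddCommGroup E]
    [NormedSpace ℝ E] {f : ℝ → E} (hpos : IntegrableOn f (Ioi 0))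
    (hneg : IntegrableOn (fun y => f (-y)) (Ioi 0)) :
    ∫ y, f y = (∫ y in Ioi 0, f y) + ∫ y in Ioi 0, f (-y) := by
  have hIic : IntegrableOn f (Iic 0) := by
    have m : MeasurableEmbedding fun y : ℝ => -y := (Homeomorph.neg ℝ).measurableEmbedding
    rw [← Measure.map_neg_eq_self (volume : Measure ℝ), m.integrableOn_map_iff]
    simpa [Function.comp_def] using Iff.mpr integrableOn_Ici_iff_integrableOn_Ioi hneg
  rw [← intervalIntegral.integral_Iic_add_Ioi hIic hpos, integral_comp_neg_Ioi, neg_zero, add_comm]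

section PositiveHalfLine

variable {a β : ℝ}

theorem hasDerivAt_one_sub_one_add_rpow (β : ℝ) {y : ℝ} (hy : -1 < y) :
    HasDerivAt (fun y => 1 - (1 + y) ^ β) (-β * (1 + y) ^ (β - 1)) y := by
  simpa using
    ((hasDerivAt_id' y).const_add 1).rpow_const (p := β) (Or.inl (by linarith)) |>.const_sub 1

theorem one_sub_one_add_rpow_isBigO_atTop (hβ : 0 < β) :
    (fun y : ℝ => 1 - (1 + y) ^ β) =O[atTop] (· ^ β) := by
  refine IsBigO.sub ?_ (one_add_rpow_isTheta_rpow β).isBigO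
  refine (isLittleO_one_left_iff ℝ).2 ?_ |>.isBigO
  exact tendsto_norm_atTop_atTop.comp (tendsto_rpow_atTop hβ)

theorem integrableOn_Ioi_one_sub_one_add_rpow_mul_rpow (ha : a < 1) (hβ : 0 < β) (hβa : β < a) :
    IntegrableOn (fun y : ℝ => (1 - (1 + y) ^ β) * y ^ (-1 - a)) (Ioi 0) := by
  refine integrableOn_Ioi_of_isBigO_rpow
    (continuousOn_of_forall_continuousAt fun y (hy : 0 < y) => ?_) (p := 1 + (-1 - a)) (by linarith)
    (((hasDerivAt_one_sub_one_add_rpow β (by norm_num)).isBigO_rpow_one_nhdsGT_zero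
      (by simp)).mul_rpow self_mem_nhdsWithin _) (q := β + (-1 - a)) (by linarith)
    ((one_sub_one_add_rpow_isBigO_atTop hβ).mul_rpow (eventually_gt_atTop 0) _)
  fun_prop (disch := exact Or.inl (by positivity))

theorem integrableOn_Ioi_one_add_rpow_mul_rpow (ha : a < 1) (hβa : β < a) :
    IntegrableOn (fun y : ℝ => (1 + y) ^ (β - 1) * y ^ (-a)) (Ioi 0) := by
  have h0 : (fun y : ℝ => (1 + y) ^ (β - 1)) =O[𝓝[>] 0] (· ^ (0 : ℝ)) := by
    have : ContinuousAt (fun y : ℝ => (1 + y) ^ (β - 1)) 0 := by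
      fun_prop (disch := exact Or.inl (by norm_num))
    simpa using (this.tendsto.mono_left nhdsWithin_le_nhds).isBigO_one ℝ
  refine integrableOn_Ioi_of_isBigO_rpow
    (continuousOn_of_forall_continuousAt fun y (hy : 0 < y) => ?_) (p := 0 + -a) (by linarith)
    (h0.mul_rpow self_mem_nhdsWithin _) (q := β - 1 + -a) (by linarith)
    ((one_add_rpow_isTheta_rpow _).isBigO.mul_rpow (eventually_gt_atTop 0) _)
  fun_prop (disch := exact Or.inl (by positivity))

theorem integral_Ioi_one_add_rpow_mul_rpow (ha : a < 1) (hβa : β < a) :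
    ∫ y in Ioi 0, (1 + y) ^ (β - 1) * y ^ (-a) = Gamma (1 - a) * Gamma (a - β) / Gamma (1 - β) := by
  have h := integral_Ioi_rpow_mul_one_add_rpow (u := 1 - a) (v := a - β) (by linarith) (by linarith)
  rw [show 1 - a + (a - β) = 1 - β by ring] at h
  rw [← h]
  refine setIntegral_congr_fun measurableSet_Ioi fun y _ => ?_
  ring_nf

theorem integral_Ioi_one_sub_one_add_rpow_mul_rpow (ha : a < 1) (hβ : 0 < β) (hβa : β < a) :
    ∫ y in Ioi 0, (1 - (1 + y) ^ β) * y ^ (-1 - a)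
      = Gamma (1 - a) / a * (Gamma (a - β) / Gamma (-β)) := by
  have hg0 :=
    (hasDerivAt_one_sub_one_add_rpow β (by norm_num)).isBigO_rpow_one_nhdsGT_zero (by simp)
  have h0 : Tendsto (fun y : ℝ => (1 - (1 + y) ^ β) * y ^ (-a)) (𝓝[>] 0) (𝓝 0) :=
    (hg0.mul_rpow self_mem_nhdsWithin _).trans_tendsto (tendsto_rpow_nhdsGT_zero (by linarith))
  have htop : Tendsto (fun y : ℝ => (1 - (1 + y) ^ β) * y ^ (-a)) atTop (𝓝 0) := by
    refine ((one_sub_one_add_rpow_isBigO_atTop hβ).mul_rpow (eventually_gt_atTop 0) _)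
      |>.trans_tendsto ?_
    simpa [sub_eq_add_neg] using tendsto_rpow_neg_atTop (sub_pos.2 hβa)
  have hΓ : Gamma (1 - β) = -β * Gamma (-β) := by
    rw [← Gamma_add_one (neg_ne_zero.2 hβ.ne'), neg_add_eq_sub]
  rw [integral_Ioi_mul_rpow_neg_one_sub (hβ.trans hβa).ne'
    (fun y (hy : 0 < y) => hasDerivAt_one_sub_one_add_rpow β (by linarith)) h0 htop
    (integrableOn_Ioi_one_sub_one_add_rpow_mul_rpow ha hβ hβa)
    (by simpa only [IntegrableOn, mul_assoc] using
      (integrableOn_Ioi_one_add_rpow_mul_rpow ha hβa).const_mul (-β))]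
  simp_rw [mul_assoc, integral_const_mul, integral_Ioi_one_add_rpow_mul_rpow ha hβa, hΓ]
  field_simp

end PositiveHalfLine

section NegativeHalfLine

variable {a β : ℝ}

theorem hasDerivAt_one_sub_one_sub_rpow (β : ℝ) {y : ℝ} (hy : y < 1) :
    HasDerivAt (fun y => 1 - (1 - y) ^ β) (β * (1 - y) ^ (β - 1)) y := by
  simpa using
    ((hasDerivAt_id' y).const_sub 1).rpow_const (p := β) (Or.inl (by linarith)) |>.const_sub 1

theorem intervalIntegrable_one_sub_rpow_mul_rpow (ha : a < 1) (hβ : 0 < β) :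
    IntervalIntegrable (fun y => (1 - y) ^ (β - 1) * y ^ (-a)) volume 0 1 :=
  (intervalIntegrable_rpow_mul_one_sub_rpow (u := 1 - a) (by linarith) hβ).congr
    fun y _ => by ring_nf

theorem integral_one_sub_rpow_mul_rpow (ha : a < 1) (hβ : 0 < β) :
    ∫ y in (0 : ℝ)..1, (1 - y) ^ (β - 1) * y ^ (-a)
      = Gamma (1 - a) * Gamma β / Gamma (1 - a + β) := by
  rw [← integral_rpow_mul_one_sub_rpow (by linarith) hβ]
  exact intervalIntegral.integral_congr fun y _ => by ring_nf

theorem integrableOn_Ioi_one_sub_max_rpow_mul_rpow (ha0 : 0 < a) (ha : a < 1) (hβ : 0 < β) :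
    IntegrableOn (fun y : ℝ => (1 - max (1 - y) 0 ^ β) * y ^ (-1 - a)) (Ioi 0) := by
  have h0 : (fun y : ℝ => (1 - max (1 - y) 0 ^ β) * y ^ (-1 - a))
      =ᶠ[𝓝[>] 0] fun y => (1 - (1 - y) ^ β) * y ^ (-1 - a) := by
    filter_upwards [nhdsWithin_le_nhds (Iio_mem_nhds one_pos)] with y (hy : y < 1)
    rw [max_eq_left (by linarith)]
  have htop : (fun y : ℝ => (1 - max (1 - y) 0 ^ β) * y ^ (-1 - a)) =ᶠ[atTop] (· ^ (-1 - a)) := by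
    filter_upwards [eventually_ge_atTop 1] with y hy
    rw [max_eq_right (by linarith), zero_rpow hβ.ne', sub_zero, one_mul]
  refine integrableOn_Ioi_of_isBigO_rpow
    (continuousOn_of_forall_continuousAt fun y (hy : 0 < y) => ?_) (p := 1 + (-1 - a)) (by linarith)
    (h0.trans_isBigO (((hasDerivAt_one_sub_one_sub_rpow β one_pos).isBigO_rpow_one_nhdsGT_zero
      (by simp)).mul_rpow self_mem_nhdsWithin _))
    (by linarith) htop.isBigO
  fun_prop (disch := first | exact Or.inr hβ.le | exact Or.inl (by positivity))

theorem integral_Ioi_one_sub_max_rpow_mul_rpow (ha0 : 0 < a) (ha : a < 1) (hβ : 0 < β) :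
    ∫ y in Ioi 0, (1 - max (1 - y) 0 ^ β) * y ^ (-1 - a)
      = Gamma (1 - a) / a * (Gamma (1 + β) / Gamma (1 - a + β)) := by
  have hint := integrableOn_Ioi_one_sub_max_rpow_mul_rpow ha0 ha hβ
  have hIoc : EqOn (fun y : ℝ => (1 - max (1 - y) 0 ^ β) * y ^ (-1 - a))
      (fun y => (1 - (1 - y) ^ β) * y ^ (-1 - a)) (Ioc 0 1) := fun y hy => by
    simp only [max_eq_left (sub_nonneg.2 hy.2)]
  have hIoi : ∫ y in Ioi 1, (1 - max (1 - y) 0 ^ β) * y ^ (-1 - a) = a⁻¹ := by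
    rw [setIntegral_congr_fun measurableSet_Ioi fun y (hy : 1 < y) => by
      rw [max_eq_right (by linarith), zero_rpow hβ.ne', sub_zero, one_mul],
      integral_Ioi_rpow_of_lt (by linarith) one_pos, one_rpow, show -1 - a + 1 = -a by ring,
      neg_div_neg_eq, one_div]
  have hi : IntervalIntegrable (fun y => (1 - (1 - y) ^ β) * y ^ (-1 - a)) volume 0 1 :=
    (intervalIntegrable_iff_integrableOn_Ioc_of_le zero_le_one).2
      ((hint.mono_set Ioc_subset_Ioi_self).congr_fun hIoc measurableSet_Ioc)
  have hi' : IntervalIntegrable (fun y => β * (1 - y) ^ (β - 1) * y ^ (-a)) volume 0 1 := by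
    simpa only [mul_assoc] using (intervalIntegrable_one_sub_rpow_mul_rpow ha hβ).const_mul β
  have h0 : Tendsto (fun y : ℝ => (1 - (1 - y) ^ β) * y ^ (-a)) (𝓝[>] 0) (𝓝 0) :=
    (((hasDerivAt_one_sub_one_sub_rpow β one_pos).isBigO_rpow_one_nhdsGT_zero (by simp)).mul_rpow
      self_mem_nhdsWithin _).trans_tendsto (tendsto_rpow_nhdsGT_zero (by linarith))
  have h1 : ContinuousWithinAt (fun y : ℝ => 1 - (1 - y) ^ β) (Iio 1) 1 := by
    refine Continuous.continuousWithinAt ?_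
    fun_prop (disch := exact hβ.le)
  rw [← Ioc_union_Ioi_eq_Ioi zero_le_one, setIntegral_union (Ioc_disjoint_Ioi le_rfl)
    measurableSet_Ioi (hint.mono_set Ioc_subset_Ioi_self)
    (hint.mono_set (Ioi_subset_Ioi zero_le_one)),
    setIntegral_congr_fun measurableSet_Ioc hIoc, ← intervalIntegral.integral_of_le zero_le_one,
    hIoi, integral_zero_one_mul_rpow_neg_one_sub ha0.ne'
      (fun y hy => hasDerivAt_one_sub_one_sub_rpow β hy.2) h0 h1 hi hi']
  simp_rw [mul_assoc, intervalIntegral.integral_const_mul, integral_one_sub_rpow_mul_rpow ha hβ,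
    add_comm 1 β, Gamma_add_one hβ.ne']
  simp only [sub_self, zero_rpow hβ.ne', sub_zero]
  field_simp
  ring

end NegativeHalfLine

theorem stmt5 (s β : ℝ) (hs : s ∈ Set.Ioo (0:ℝ) (1/2)) (hβ : β ∈ Set.Ioo 0 (2*s)) :
    ∫ y : ℝ, (1 - (max (1+y) 0) ^ β) * |y| ^ (-1 - 2*s)
      = (Real.Gamma (1-2*s) / (2*s)) *
        (Real.Gamma (2*s-β) / Real.Gamma (-β) + Real.Gamma (1+β) / Real.Gamma (1-2*s+β)) := by
  obtain ⟨hs0, hs1⟩ := hs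
  obtain ⟨hβ0, hβs⟩ := hβ
  have hpos : EqOn (fun y : ℝ => (1 - max (1 + y) 0 ^ β) * |y| ^ (-1 - 2 * s))
      (fun y => (1 - (1 + y) ^ β) * y ^ (-1 - 2 * s)) (Ioi 0) := fun y (hy : 0 < y) => by
    dsimp only
    rw [max_eq_left (by linarith), abs_of_pos hy]
  have hneg : EqOn (fun y : ℝ => (1 - max (1 + -y) 0 ^ β) * |-y| ^ (-1 - 2 * s))
      (fun y => (1 - max (1 - y) 0 ^ β) * y ^ (-1 - 2 * s)) (Ioi 0) := fun y (hy : 0 < y) => by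
    dsimp only
    rw [← sub_eq_add_neg, abs_neg, abs_of_pos hy]
  have hint_pos := integrableOn_Ioi_one_sub_one_add_rpow_mul_rpow (a := 2 * s) (by linarith) hβ0 hβs
  have hint_neg :=
    integrableOn_Ioi_one_sub_max_rpow_mul_rpow (a := 2 * s) (by linarith) (by linarith) hβ0
  rw [integral_eq_integral_Ioi_add_integral_Ioi_comp_neg
      (hint_pos.congr_fun hpos.symm measurableSet_Ioi)
      (hint_neg.congr_fun hneg.symm measurableSet_Ioi),
    setIntegral_congr_fun measurableSet_Ioi hpos, setIntegral_congr_fun measurableSet_Ioi hneg,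
    integral_Ioi_one_sub_one_add_rpow_mul_rpow (by linarith) hβ0 hβs,
    integral_Ioi_one_sub_max_rpow_mul_rpow (a := 2 * s) (by linarith) (by linarith) hβ0, mul_add]
end

section
/- Let θ ∈ (0,1). Then the integral ∫₁^∞ ( ((t-1)/(t+1))^θ + ((t+1)/(t-1))^θ - 2 ) dt converges and equals 2 - 2πθ cot(πθ). -/
open Real MeasureTheory Filter

noncomputable def gfun (n : ℕ) (y : ℝ) : ℝ := Real.log (1 - y^2/((n:ℝ)+1)^2)
noncomputable def gfun' (n : ℕ) (y : ℝ) : ℝ := -2*y/(((n:ℝ)+1)^2 - y^2)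

lemma summable_inv_sq_shift : Summable (fun n : ℕ => 1/((n:ℝ)+1)^2) := by
  have h : Summable (fun n : ℕ => 1/(n:ℝ)^2) := by
    rw [Real.summable_one_div_nat_pow]
    exact one_lt_two
  have := (summable_nat_add_iff (f := fun n : ℕ => 1/(n:ℝ)^2) 1).mpr h
  refine this.congr fun n => by push_cast; ring_nf

lemma summable_u {b : ℝ} (hb0 : 0 ≤ b) (hb1 : b < 1) :
    Summable (fun n : ℕ => 2*b/(((n:ℝ)+1)^2 - b^2)) := by
  have hb2 : b^2 < 1 := by nlinarith
  refine Summable.of_nonneg_of_le (fun n => ?_) (fun n => ?_)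
    ((summable_inv_sq_shift).mul_left (2*b/(1-b^2)))
  · have h1 : (0:ℝ) < ((n:ℝ)+1)^2 - b^2 := by
      have : (1:ℝ) ≤ ((n:ℝ)+1)^2 := by nlinarith [Nat.cast_nonneg (α := ℝ) n]
      nlinarith
    positivity
  · have hn1 : (1:ℝ) ≤ ((n:ℝ)+1)^2 := by nlinarith [Nat.cast_nonneg (α := ℝ) n]
    have h1 : (0:ℝ) < ((n:ℝ)+1)^2 - b^2 := by nlinarith
    have h2 : ((n:ℝ)+1)^2 * (1-b^2) ≤ ((n:ℝ)+1)^2 - b^2 := by nlinarith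
    have hrhs : 2*b/(1-b^2)*(1/((n:ℝ)+1)^2) = 2*b/((1-b^2)*((n:ℝ)+1)^2) := by
      field_simp
    rw [hrhs, div_le_div_iff₀ h1 (mul_pos (by linarith) (by positivity))]
    nlinarith

lemma gfun_hasDerivAt {b : ℝ} (hb1 : b < 1) {n : ℕ} {y : ℝ} (hy : y ∈ Set.Ioo (-b) b) :
    HasDerivAt (gfun n) (gfun' n y) y := by
  have hn1 : (1:ℝ) ≤ ((n:ℝ)+1)^2 := by nlinarith [Nat.cast_nonneg (α := ℝ) n]
  have hy2 : y^2 < 1 := by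
    rcases hy with ⟨h1, h2⟩
    nlinarith
  have hpos : 0 < 1 - y^2/((n:ℝ)+1)^2 := by
    rw [sub_pos, div_lt_one (by positivity)]
    linarith
  have h1 : HasDerivAt (fun z : ℝ => 1 - z^2/((n:ℝ)+1)^2) (-(2*y/((n:ℝ)+1)^2)) y := by
    have := ((hasDerivAt_pow 2 y).div_const (((n:ℝ)+1)^2)).const_sub 1
    simpa using this
  have := h1.log (ne_of_gt hpos)
  convert this using 1
  · rfl
  unfold gfun'
  rw [div_eq_div_iff (by nlinarith) (ne_of_gt hpos)]
  field_simp

lemma gfun'_bound {b : ℝ} (hb1 : b < 1) {n : ℕ} {y : ℝ} (hy : y ∈ Set.Ioo (-b) b) :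
    ‖gfun' n y‖ ≤ 2*b/(((n:ℝ)+1)^2 - b^2) := by
  have hn1 : (1:ℝ) ≤ ((n:ℝ)+1)^2 := by nlinarith [Nat.cast_nonneg (α := ℝ) n]
  have hyb : |y| ≤ b := by
    rw [abs_le]; exact ⟨hy.1.le, hy.2.le⟩
  have hb0 : 0 ≤ b := le_trans (abs_nonneg y) hyb
  have hy2 : y^2 ≤ b^2 := by nlinarith [abs_nonneg y, sq_abs y]
  have hden : (0:ℝ) < ((n:ℝ)+1)^2 - b^2 := by nlinarith
  have hden' : (0:ℝ) < ((n:ℝ)+1)^2 - y^2 := by nlinarith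
  unfold gfun'
  rw [Real.norm_eq_abs, abs_div, abs_of_pos hden']
  have : |(-2*y)| = 2*|y| := by rw [abs_mul]; simp [abs_of_nonpos]
  rw [this]
  exact div_le_div₀ (by positivity) (by linarith) hden (by linarith)

lemma tsum_gfun_eq {b : ℝ} (hb0 : 0 < b) (hb1 : b < 1) {z : ℝ} (hz : z ∈ Set.Ioo 0 b) :
    ∑' n, gfun n z = Real.log (Real.sin (π*z) / (π*z)) := by
  obtain ⟨hz0, hzb⟩ := hz
  have hz1 : z < 1 := lt_trans hzb hb1
  have hπz : 0 < π*z := by positivity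
  have hsin : 0 < Real.sin (π*z) :=
    Real.sin_pos_of_pos_of_lt_pi hπz (by nlinarith [Real.pi_pos])
  have hfacpos : ∀ j : ℕ, 0 < 1 - z^2/((j:ℝ)+1)^2 := by
    intro j
    have hn1 : (1:ℝ) ≤ ((j:ℝ)+1)^2 := by nlinarith [Nat.cast_nonneg (α := ℝ) j]
    rw [sub_pos, div_lt_one (by positivity)]
    nlinarith
  -- products tend to sin(πz)/(πz)
  have hprod : Tendsto (fun n : ℕ => ∏ j ∈ Finset.range n, ((1:ℝ) - z^2/((j:ℝ)+1)^2))
      atTop (nhds (Real.sin (π*z) / (π*z))) := by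
    have h := (Real.tendsto_euler_sin_prod z).div_const (π*z)
    refine h.congr fun n => ?_
    rw [mul_comm, mul_div_assoc, div_self (ne_of_gt hπz), mul_one]
  -- log of partial sums
  have hlog : Tendsto (fun n : ℕ => ∑ j ∈ Finset.range n, gfun j z) atTop
      (nhds (Real.log (Real.sin (π*z) / (π*z)))) := by
    have hcont := (Real.continuousAt_log (ne_of_gt (by positivity : (0:ℝ) < Real.sin (π*z)/(π*z)))).tendsto
    have := hcont.comp hprod
    refine this.congr fun n => ?_
    rw [Function.comp_apply, Real.log_prod (fun j _ => ne_of_gt (hfacpos j))]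
    rfl
  -- summability
  have hsum : Summable fun n => gfun n z := by
    refine summable_of_summable_hasDerivAt_of_isPreconnected
      (summable_u hb0.le hb1) isOpen_Ioo (t := Set.Ioo (-b) b)
      (convex_Ioo _ _).isPreconnected
      (fun n y hy => gfun_hasDerivAt hb1 hy) (fun n y hy => gfun'_bound hb1 hy)
      (Set.mem_Ioo.mpr ⟨neg_lt_zero.mpr hb0, hb0⟩) ?_ (Set.mem_Ioo.mpr ⟨by linarith, hzb⟩)
    have : ∀ n : ℕ, gfun n 0 = 0 := by intro n; simp [gfun]
    simpa [this] using summable_zero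
  exact tendsto_nhds_unique hsum.hasSum.tendsto_sum_nat hlog

lemma cot_partial_fraction {x : ℝ} (hx0 : 0 < x) (hx1 : x < 1) :
    ∑' n : ℕ, (-2*x/(((n:ℝ)+1)^2 - x^2))
      = π * Real.cos (π*x) / Real.sin (π*x) - 1/x := by
  set b : ℝ := (1+x)/2 with hb
  have hb0 : 0 < b := by positivity
  have hb1 : b < 1 := by rw [hb]; linarith
  have hxb : x < b := by rw [hb]; linarith
  have hπx : 0 < π*x := by positivity
  have hsin : 0 < Real.sin (π*x) :=
    Real.sin_pos_of_pos_of_lt_pi hπx (by nlinarith [Real.pi_pos])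
  -- derivative of the tsum
  have key : HasDerivAt (fun z => ∑' n, gfun n z) (∑' n, gfun' n x) x := by
    refine hasDerivAt_tsum_of_isPreconnected (summable_u hb0.le hb1) isOpen_Ioo
      (convex_Ioo _ _).isPreconnected
      (fun n y hy => gfun_hasDerivAt hb1 hy) (fun n y hy => gfun'_bound hb1 hy)
      (Set.mem_Ioo.mpr ⟨neg_lt_zero.mpr hb0, hb0⟩) ?_ (Set.mem_Ioo.mpr ⟨by linarith, hxb⟩)
    have : ∀ n : ℕ, gfun n 0 = 0 := by intro n; simp [gfun]
    simpa [this] using summable_zero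
  -- the tsum agrees with log(sin(πz)) - log(πz) near x
  have heq : (fun z => ∑' n, gfun n z) =ᶠ[nhds x]
      (fun z => Real.log (Real.sin (π*z)) - Real.log (π*z)) := by
    filter_upwards [isOpen_Ioo.mem_nhds (Set.mem_Ioo.mpr ⟨hx0, hxb⟩)] with z hz
    have hz0 := hz.1
    have hπz : 0 < π*z := by positivity
    have hsinz : 0 < Real.sin (π*z) :=
      Real.sin_pos_of_pos_of_lt_pi hπz (by nlinarith [Real.pi_pos, hz.2, hb1])
    rw [tsum_gfun_eq hb0 hb1 hz, Real.log_div (ne_of_gt hsinz) (ne_of_gt hπz)]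
  have key2 : HasDerivAt (fun z => Real.log (Real.sin (π*z)) - Real.log (π*z))
      (∑' n, gfun' n x) x := key.congr_of_eventuallyEq heq.symm
  -- explicit derivative
  have h1 : HasDerivAt (fun z : ℝ => π*z) π x := by
    simpa using (hasDerivAt_id x).const_mul π
  have h2 : HasDerivAt (fun z => Real.log (Real.sin (π*z)))
      (Real.cos (π*x) * π / Real.sin (π*x)) x :=
    (((Real.hasDerivAt_sin (π*x)).comp x h1)).log (ne_of_gt hsin)
  have h3 : HasDerivAt (fun z => Real.log (π*z)) (π/(π*x)) x := h1.log (ne_of_gt hπx)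
  have h4 := h2.sub h3
  have heq2 := key2.unique h4
  unfold gfun' at heq2
  rw [heq2]
  have hπ := Real.pi_ne_zero
  field_simp

lemma phi_image : (fun u : ℝ => (1+u)/(1-u)) '' Set.Ioo 0 1 = Set.Ioi 1 := by
  ext t
  simp only [Set.mem_image, Set.mem_Ioi, Set.mem_Ioo]
  constructor
  · rintro ⟨u, ⟨hu0, hu1⟩, rfl⟩
    rw [lt_div_iff₀ (by linarith)]
    linarith
  · intro ht
    refine ⟨(t-1)/(t+1), ⟨div_pos (by linarith) (by linarith),
      (div_lt_one (by linarith)).mpr (by linarith)⟩, ?_⟩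
    have h1 : t+1 ≠ 0 := by intro h; nlinarith
    have e1 : 1 + (t-1)/(t+1) = 2*t/(t+1) := by field_simp; ring
    have e2 : 1 - (t-1)/(t+1) = 2/(t+1) := by field_simp; ring
    rw [e1, e2]
    field_simp

lemma cov (θ : ℝ) :
    ∫ t in Set.Ioi (1:ℝ), (((t-1)/(t+1)) ^ θ + ((t+1)/(t-1)) ^ θ - 2)
      = ∫ u in Set.Ioo (0:ℝ) 1, (2/(1-u)^2) * (u ^ θ + u ^ (-θ) - 2) := by
  have hderiv : ∀ u ∈ Set.Ioo (0:ℝ) 1,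
      HasDerivWithinAt (fun u : ℝ => (1+u)/(1-u)) (2/(1-u)^2) (Set.Ioo 0 1) u := by
    intro u hu
    have h1u : (1:ℝ) - u ≠ 0 := by intro h; have := hu.2; nlinarith
    have hd : HasDerivAt (fun u : ℝ => (1+u)/(1-u))
        ((1*(1-u) - (1+u)*(-1))/((1-u)^2)) u := by
      exact (((hasDerivAt_id u).const_add 1)).div
        (((hasDerivAt_id u).const_sub 1)) h1u
    have : (1*(1-u) - (1+u)*(-1))/((1-u)^2) = 2/(1-u)^2 := by
      congr 1; ring
    rw [this] at hd
    exact hd.hasDerivWithinAt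
  have hinj : Set.InjOn (fun u : ℝ => (1+u)/(1-u)) (Set.Ioo 0 1) := by
    intro a ha b hb h
    have h1a : (1:ℝ) - a ≠ 0 := by intro hh; have := ha.2; nlinarith
    have h1b : (1:ℝ) - b ≠ 0 := by intro hh; have := hb.2; nlinarith
    field_simp at h
    nlinarith
  rw [← phi_image, integral_image_eq_integral_abs_deriv_smul measurableSet_Ioo hderiv hinj]
  refine setIntegral_congr_fun measurableSet_Ioo fun u hu => ?_
  obtain ⟨hu0, hu1⟩ := hu
  have h1u : (0:ℝ) < 1 - u := by linarith
  have ea : (1+u)/(1-u) - 1 = (2*u)/(1-u) := by field_simp; ring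
  have eb : (1+u)/(1-u) + 1 = 2/(1-u) := by field_simp; ring
  have e1 : ((1+u)/(1-u) - 1)/((1+u)/(1-u) + 1) = u := by
    rw [ea, eb]; field_simp
  have e2 : ((1+u)/(1-u) + 1)/((1+u)/(1-u) - 1) = u⁻¹ := by
    rw [ea, eb]; field_simp
  simp only [smul_eq_mul]
  rw [e1, e2, abs_of_pos (by positivity : (0:ℝ) < 2/(1-u)^2),
    Real.inv_rpow hu0.le, ← Real.rpow_neg hu0.le]

noncomputable def hfun (θ : ℝ) (n : ℕ) (u : ℝ) : ℝ :=
  2*(u ^ θ + u ^ (-θ) - 2) * (((n:ℝ)+1) * u ^ n)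

lemma hfun_hasSum {θ u : ℝ} (hu0 : 0 < u) (hu1 : u < 1) :
    HasSum (fun n => hfun θ n u) ((2/(1-u)^2) * (u ^ θ + u ^ (-θ) - 2)) := by
  have h1u : (1:ℝ) - u ≠ 0 := by intro h; nlinarith
  have h1 : HasSum (fun n : ℕ => (n:ℝ) * u ^ n) (u/(1-u)^2) :=
    hasSum_coe_mul_geometric_of_norm_lt_one (by rw [Real.norm_eq_abs, abs_of_pos hu0]; exact hu1)
  have h2 : HasSum (fun n : ℕ => u ^ n) ((1-u)⁻¹) :=
    hasSum_geometric_of_lt_one hu0.le hu1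
  have h3 := (h1.add h2).mul_left (2*(u ^ θ + u ^ (-θ) - 2))
  have e1 : (fun n : ℕ => 2*(u ^ θ + u ^ (-θ) - 2) * ((n:ℝ) * u ^ n + u ^ n))
      = fun n => hfun θ n u := by
    funext n; unfold hfun; ring
  have e2 : 2*(u ^ θ + u ^ (-θ) - 2) * (u/(1-u)^2 + (1-u)⁻¹)
      = (2/(1-u)^2) * (u ^ θ + u ^ (-θ) - 2) := by
    field_simp; ring
  rw [e1, e2] at h3
  exact h3

lemma hfun_nonneg {θ u : ℝ} (hu0 : 0 < u) (n : ℕ) : 0 ≤ hfun θ n u := by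
  have h : 2 ≤ u ^ θ + u ^ (-θ) := by
    have hp : (0:ℝ) < u ^ θ := Real.rpow_pos_of_pos hu0 θ
    rw [Real.rpow_neg hu0.le]
    have := sq_nonneg (u ^ θ - 1)
    rw [← sub_nonneg]
    have e : u ^ θ + (u ^ θ)⁻¹ - 2 = (u ^ θ - 1)^2 / (u ^ θ) := by field_simp; ring
    rw [e]
    positivity
  unfold hfun
  have h1 : (0:ℝ) ≤ u ^ θ + u ^ (-θ) - 2 := by linarith
  positivity

lemma hfun_eq_on {θ : ℝ} (n : ℕ) {u : ℝ} (hu0 : 0 < u) :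
    hfun θ n u = 2*((n:ℝ)+1) * (u ^ ((n:ℝ)+θ) + u ^ ((n:ℝ)-θ) - 2*u ^ ((n:ℝ))) := by
  unfold hfun
  have e0 : u ^ (n:ℕ) = u ^ ((n:ℝ)) := (Real.rpow_natCast u n).symm
  have e1 : u ^ ((n:ℝ)+θ) = u ^ ((n:ℝ)) * u ^ θ := Real.rpow_add hu0 _ _
  have e2 : u ^ ((n:ℝ)-θ) = u ^ ((n:ℝ)) * u ^ (-θ) := by
    rw [sub_eq_add_neg]; exact Real.rpow_add hu0 _ _
  rw [e0, e1, e2]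
  ring

lemma rpow_intervalIntegral {r : ℝ} (hr : -1 < r) :
    ∫ x in (0:ℝ)..1, x ^ r = 1/(r+1) := by
  rw [integral_rpow (Or.inl hr)]
  rw [Real.one_rpow, Real.zero_rpow (by linarith : r + 1 ≠ 0)]
  norm_num

lemma hfun_integrable {θ : ℝ} (hθ0 : 0 < θ) (hθ1 : θ < 1) (n : ℕ) :
    IntegrableOn (hfun θ n) (Set.Ioo (0:ℝ) 1) := by
  have hn0 : (0:ℝ) ≤ (n:ℝ) := Nat.cast_nonneg n
  have h1 : IntervalIntegrable (fun u : ℝ => 2*((n:ℝ)+1) *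
      (u ^ ((n:ℝ)+θ) + u ^ ((n:ℝ)-θ) - 2*u ^ ((n:ℝ)))) volume 0 1 := by
    refine (((intervalIntegral.intervalIntegrable_rpow' (by linarith)).add
      (intervalIntegral.intervalIntegrable_rpow' (by linarith))).sub
      ((intervalIntegral.intervalIntegrable_rpow' (by linarith)).const_mul 2)).const_mul _
  have h2 : IntegrableOn (fun u : ℝ => 2*((n:ℝ)+1) *
      (u ^ ((n:ℝ)+θ) + u ^ ((n:ℝ)-θ) - 2*u ^ ((n:ℝ)))) (Set.Ioo (0:ℝ) 1) :=
    ((intervalIntegrable_iff_integrableOn_Ioc_of_le zero_le_one).mp h1).mono_set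
      Set.Ioo_subset_Ioc_self
  exact h2.congr_fun (fun u hu => (hfun_eq_on n hu.1).symm) measurableSet_Ioo

lemma hfun_integral {θ : ℝ} (hθ0 : 0 < θ) (hθ1 : θ < 1) (n : ℕ) :
    ∫ u in Set.Ioo (0:ℝ) 1, hfun θ n u = 4*θ^2/(((n:ℝ)+1)^2 - θ^2) := by
  have hn0 : (0:ℝ) ≤ (n:ℝ) := Nat.cast_nonneg n
  rw [setIntegral_congr_fun measurableSet_Ioo
    (fun u hu => hfun_eq_on n hu.1 : Set.EqOn _ (fun u => 2*((n:ℝ)+1) *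
      (u ^ ((n:ℝ)+θ) + u ^ ((n:ℝ)-θ) - 2*u ^ ((n:ℝ)))) _)]
  rw [← integral_Ioc_eq_integral_Ioo, ← intervalIntegral.integral_of_le zero_le_one]
  have i1 : IntervalIntegrable (fun u : ℝ => u ^ ((n:ℝ)+θ)) volume 0 1 :=
    intervalIntegral.intervalIntegrable_rpow' (by linarith)
  have i2 : IntervalIntegrable (fun u : ℝ => u ^ ((n:ℝ)-θ)) volume 0 1 :=
    intervalIntegral.intervalIntegrable_rpow' (by linarith)
  have i3 : IntervalIntegrable (fun u : ℝ => 2*u ^ ((n:ℝ))) volume 0 1 :=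
    (intervalIntegral.intervalIntegrable_rpow' (by linarith)).const_mul 2
  rw [intervalIntegral.integral_const_mul, intervalIntegral.integral_sub (i1.add i2) i3,
    intervalIntegral.integral_add i1 i2, intervalIntegral.integral_const_mul,
    rpow_intervalIntegral (by linarith), rpow_intervalIntegral (by linarith),
    rpow_intervalIntegral (by linarith)]
  have d1 : (n:ℝ)+θ+1 ≠ 0 := by positivity
  have d2 : (n:ℝ)-θ+1 ≠ 0 := by intro h; nlinarith
  have d3 : (n:ℝ)+1 ≠ 0 := by positivity
  have d4 : ((n:ℝ)+1)^2 - θ^2 ≠ 0 := by nlinarith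
  field_simp
  ring

theorem stmt9 (θ : ℝ) (hθ : θ ∈ Set.Ioo (0:ℝ) 1) :
    ∫ t in Set.Ioi (1:ℝ), (((t-1)/(t+1)) ^ θ + ((t+1)/(t-1)) ^ θ - 2)
      = 2 - 2 * Real.pi * θ * (Real.cos (Real.pi*θ) / Real.sin (Real.pi*θ)) := by
  obtain ⟨hθ0, hθ1⟩ := hθ
  have hsin : 0 < Real.sin (π*θ) :=
    Real.sin_pos_of_pos_of_lt_pi (by positivity) (by nlinarith [Real.pi_pos])
  -- summability of the termwise integrals
  have hc : Summable (fun n : ℕ => 4*θ^2/(((n:ℝ)+1)^2 - θ^2)) := by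
    have := (summable_u hθ0.le hθ1).mul_left (2*θ)
    refine this.congr fun n => ?_
    field_simp
    ring
  -- interchange integral and sum
  rw [cov θ]
  have step1 : ∫ u in Set.Ioo (0:ℝ) 1, (2/(1-u)^2) * (u ^ θ + u ^ (-θ) - 2)
      = ∫ u in Set.Ioo (0:ℝ) 1, ∑' n, hfun θ n u := by
    refine setIntegral_congr_fun measurableSet_Ioo fun u hu => ?_
    exact ((hfun_hasSum hu.1 hu.2).tsum_eq).symm
  have hnorm : ∀ n : ℕ, ∫ u in Set.Ioo (0:ℝ) 1, ‖hfun θ n u‖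
      = 4*θ^2/(((n:ℝ)+1)^2 - θ^2) := by
    intro n
    rw [setIntegral_congr_fun measurableSet_Ioo
      (fun u hu => Real.norm_of_nonneg (hfun_nonneg hu.1 n) : Set.EqOn _ (hfun θ n) _)]
    exact hfun_integral hθ0 hθ1 n
  have step2 : ∑' n : ℕ, (∫ u in Set.Ioo (0:ℝ) 1, hfun θ n u)
      = ∫ u in Set.Ioo (0:ℝ) 1, ∑' n, hfun θ n u := by
    refine integral_tsum_of_summable_integral_norm (fun n => hfun_integrable hθ0 hθ1 n) ?_
    refine hc.congr fun n => (hnorm n).symm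
  rw [step1, ← step2]
  have step3 : ∑' n : ℕ, (∫ u in Set.Ioo (0:ℝ) 1, hfun θ n u)
      = ∑' n : ℕ, 4*θ^2/(((n:ℝ)+1)^2 - θ^2) := by
    exact tsum_congr fun n => hfun_integral hθ0 hθ1 n
  rw [step3]
  -- evaluate the sum using the cotangent partial fraction expansion
  have hpf := cot_partial_fraction hθ0 hθ1
  have e1 : ∑' n : ℕ, 4*θ^2/(((n:ℝ)+1)^2 - θ^2)
      = ∑' n : ℕ, (-2*θ) * (-2*θ/(((n:ℝ)+1)^2 - θ^2)) := by
    refine tsum_congr fun n => by ring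
  rw [e1, tsum_mul_left, hpf]
  have hπ := Real.pi_ne_zero
  field_simp
  ring
end
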